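/- Let a, b, c ∈ ℝ with b ≠ 0, a/b < 1 and c ≠ 0. Then Δ > 0, the real roots of f₁ are exactly 0, z₁ = c/(2b) − √Δ and z₂ = c/(2b) + √Δ, these three roots are pairwise distinct with z₁ < 0 < z₂, and β₂(z)β₃(z) < 0 at each of the three roots, i.e. all three roots are of saddle type (Darbouxian type D₃). -/

import Mathlib

noncomputable section

/-- `Δ = (c/(2b))² − a/b + 2`. -/
def disc (a b c : ℝ) : ℝ := (c / (2 * b)) ^ 2 - a / b + 2

/-- The cubic `f₁(z) = b z³ − c z² + (a − 2b) z`. -/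
def cubicF (a b c z : ℝ) : ℝ := b * z ^ 3 - c * z ^ 2 + (a - 2 * b) * z

/-- `β₂(z) = 2b z² − c z + (a − b)`. -/
def beta2 (a b c z : ℝ) : ℝ := 2 * b * z ^ 2 - c * z + (a - b)

/-- `β₃(z) = −3b z² + 2c z + (2b − a)`. -/
def beta3 (a b c z : ℝ) : ℝ := -3 * b * z ^ 2 + 2 * c * z + (2 * b - a)

/-! `f₁(z) = z q(z)` with `q(z) = b z² − c z + (a − 2b)`, whose roots are `c/(2b) ∓ √Δ`.
On a root of `q` one finds `β₂ = b (z² + 1)` and `β₃ = −(b z² + 2b − a)`, so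
`β₂ β₃ = −(z² + 1)(b²(z² + 1) + b(b − a))`; at `z = 0`,
`β₂ β₃ = −(b − a)(2b − a) = −((b − a)² + b(b − a))`. Both are negative as soon as
`b(b − a) > 0`, which is `a/b < 1`. Finally `Δ − (c/(2b))² = 2 − a/b > 1`, so
`√Δ > |c/(2b)|`, which separates the three roots. -/

lemma cubicF_eq_mul (a b c z : ℝ) :
    cubicF a b c z = z * (b * z ^ 2 - c * z + (a - 2 * b)) := by
  unfold cubicF; ring

lemma quadratic_eq_mul_of_sq_eq_disc {a b c s : ℝ} (hb : b ≠ 0) (hs : s ^ 2 = disc a b c)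
    (z : ℝ) : b * z ^ 2 - c * z + (a - 2 * b) =
      b * ((z - (c / (2 * b) - s)) * (z - (c / (2 * b) + s))) := by
  have hc : 2 * b * (c / (2 * b)) = c := by field_simp
  have ha : b * (a / b) = a := by field_simp
  unfold disc at hs
  linear_combination b * hs + z * hc - ha

lemma cubicF_eq_zero_iff {a b c s : ℝ} (hb : b ≠ 0) (hs : s ^ 2 = disc a b c) {z : ℝ} :
    cubicF a b c z = 0 ↔ z = 0 ∨ z = c / (2 * b) - s ∨ z = c / (2 * b) + s := by
  rw [cubicF_eq_mul, quadratic_eq_mul_of_sq_eq_disc hb hs]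
  simp only [mul_eq_zero, sub_eq_zero, hb, false_or]

lemma mul_sub_pos_of_div_lt_one {a b : ℝ} (hb : b ≠ 0) (hab : a / b < 1) : 0 < b * (b - a) := by
  have : b * (b - a) = b ^ 2 * (1 - a / b) := by field_simp
  rw [this]
  exact mul_pos (by positivity) (by linarith)

lemma sq_lt_disc {a b : ℝ} (c : ℝ) (hab : a / b < 1) : (c / (2 * b)) ^ 2 < disc a b c := by
  unfold disc; linarith

lemma abs_lt_sqrt_disc {a b : ℝ} (c : ℝ) (hab : a / b < 1) :
    |c / (2 * b)| < Real.sqrt (disc a b c) :=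
  Real.lt_sqrt (abs_nonneg _) |>.mpr (by rw [sq_abs]; exact sq_lt_disc c hab)

lemma beta2_mul_beta3_neg_of_cubicF_eq_zero {a b c z : ℝ} (hab : 0 < b * (b - a))
    (hz : cubicF a b c z = 0) : beta2 a b c z * beta3 a b c z < 0 := by
  rw [cubicF_eq_mul, mul_eq_zero] at hz
  rcases hz with rfl | hq
  · have : beta2 a b c 0 * beta3 a b c 0 = -((b - a) ^ 2 + b * (b - a)) := by
      unfold beta2 beta3; ring
    rw [this]
    nlinarith [sq_nonneg (b - a)]
  · have : beta2 a b c z * beta3 a b c z =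
        -((z ^ 2 + 1) * (b ^ 2 * (z ^ 2 + 1) + b * (b - a))) := by
      unfold beta2 beta3
      linear_combination (-(b * z ^ 2 + 2 * b - a) - 2 * b * (z ^ 2 + 1) -
        2 * (b * z ^ 2 - c * z + (a - 2 * b))) * hq
    rw [this, neg_neg_iff_pos]
    positivity

theorem stmt3_general (a b c : ℝ) (hb : b ≠ 0) (hab : a / b < 1) :
    0 < disc a b c ∧
    ({z : ℝ | cubicF a b c z = 0} =
      {0, c / (2 * b) - Real.sqrt (disc a b c), c / (2 * b) + Real.sqrt (disc a b c)}) ∧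
    (c / (2 * b) - Real.sqrt (disc a b c) ≠ 0 ∧
      c / (2 * b) + Real.sqrt (disc a b c) ≠ 0 ∧
      c / (2 * b) - Real.sqrt (disc a b c) ≠ c / (2 * b) + Real.sqrt (disc a b c)) ∧
    (c / (2 * b) - Real.sqrt (disc a b c) < 0 ∧
      0 < c / (2 * b) + Real.sqrt (disc a b c)) ∧
    beta2 a b c 0 * beta3 a b c 0 < 0 ∧
    beta2 a b c (c / (2 * b) - Real.sqrt (disc a b c)) *
      beta3 a b c (c / (2 * b) - Real.sqrt (disc a b c)) < 0 ∧
    beta2 a b c (c / (2 * b) + Real.sqrt (disc a b c)) *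
      beta3 a b c (c / (2 * b) + Real.sqrt (disc a b c)) < 0 := by
  have hΔ : 0 < disc a b c := (sq_nonneg _).trans_lt (sq_lt_disc c hab)
  have hs : Real.sqrt (disc a b c) ^ 2 = disc a b c := Real.sq_sqrt hΔ.le
  obtain ⟨hz₁, hz₂⟩ := abs_lt.mp (abs_lt_sqrt_disc c hab)
  have hpos := mul_sub_pos_of_div_lt_one hb hab
  have hroot {z : ℝ} (hz : z = 0 ∨ z = c / (2 * b) - Real.sqrt (disc a b c) ∨
      z = c / (2 * b) + Real.sqrt (disc a b c)) : beta2 a b c z * beta3 a b c z < 0 :=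
    beta2_mul_beta3_neg_of_cubicF_eq_zero hpos ((cubicF_eq_zero_iff hb hs).mpr hz)
  refine ⟨hΔ, ?_, ⟨by linarith, by linarith, by linarith⟩, ⟨by linarith, by linarith⟩,
    hroot (by simp), hroot (by simp), hroot (by simp)⟩
  exact Set.ext fun z => cubicF_eq_zero_iff hb hs

theorem stmt3 (a b c : ℝ) (hb : b ≠ 0) (hab : a / b < 1) (hc : c ≠ 0) :
    0 < disc a b c ∧
    ({z : ℝ | cubicF a b c z = 0} =
      {0, c / (2 * b) - Real.sqrt (disc a b c), c / (2 * b) + Real.sqrt (disc a b c)}) ∧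
    (c / (2 * b) - Real.sqrt (disc a b c) ≠ 0 ∧
      c / (2 * b) + Real.sqrt (disc a b c) ≠ 0 ∧
      c / (2 * b) - Real.sqrt (disc a b c) ≠ c / (2 * b) + Real.sqrt (disc a b c)) ∧
    (c / (2 * b) - Real.sqrt (disc a b c) < 0 ∧
      0 < c / (2 * b) + Real.sqrt (disc a b c)) ∧
    beta2 a b c 0 * beta3 a b c 0 < 0 ∧
    beta2 a b c (c / (2 * b) - Real.sqrt (disc a b c)) *
      beta3 a b c (c / (2 * b) - Real.sqrt (disc a b c)) < 0 ∧
    beta2 a b c (c / (2 * b) + Real.sqrt (disc a b c)) *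
      beta3 a b c (c / (2 * b) + Real.sqrt (disc a b c)) < 0 :=
  stmt3_general a b c hb hab
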